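/- Let Ω = {(t,x,v) ∈ ℝ³ : v + t + eˣ ≠ 0}. Define on Ω: ξ(t,x,v) = −2/(v + t + eˣ) and θ(t,x,v) = 1 − 2eˣ/(v + t + eˣ) (so that θ = φ_t + φ_x ξ with φ = t + eˣ). Then the pair (ξ, θ) satisfies the determining system for reduction operators of the potential fast diffusion equation on Ω. (This verifies Case 3 with φ = t + eˣ of the classification theorem of non-Lie reduction operators.) -/

import Mathlib

/-- Partial derivative with respect to the first variable `t`. -/
noncomputable def pt3 (f : ℝ × ℝ × ℝ → ℝ) (p : ℝ × ℝ × ℝ) : ℝ :=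
  deriv (fun t => f (t, p.2.1, p.2.2)) p.1

/-- Partial derivative with respect to the second variable `x`. -/
noncomputable def px3 (f : ℝ × ℝ × ℝ → ℝ) (p : ℝ × ℝ × ℝ) : ℝ :=
  deriv (fun x => f (p.1, x, p.2.2)) p.2.1

/-- Partial derivative with respect to the third variable `v`. -/
noncomputable def pv3 (f : ℝ × ℝ × ℝ → ℝ) (p : ℝ × ℝ × ℝ) : ℝ :=
  deriv (fun v => f (p.1, p.2.1, v)) p.2.2

/-- The determining system for reduction operators `Q = ∂_t + ξ∂_x + θ∂_v`
of the potential fast diffusion equation `v_t = v_xx / v_x`: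
(i) `ξ_vv = ξ ξ_v`; (ii) `ξ_t = 2ξ_xv − θ_vv − θ_v ξ + θ ξ_v − ξ ξ_x`;
(iii) `θ_xx = θ θ_x`; (iv) `θ_t = 2θ_xv − ξ_xx − ξ_x θ + ξ θ_x − θ θ_v`. -/
def DeterminingSystem (ξ θ : ℝ × ℝ × ℝ → ℝ) (Ω : Set (ℝ × ℝ × ℝ)) : Prop :=
  ∀ p ∈ Ω,
    pv3 (pv3 ξ) p = ξ p * pv3 ξ p ∧
    pt3 ξ p =
      2 * pv3 (px3 ξ) p - pv3 (pv3 θ) p - pv3 θ p * ξ p + θ p * pv3 ξ p - ξ p * px3 ξ p ∧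
    px3 (px3 θ) p = θ p * px3 θ p ∧
    pt3 θ p =
      2 * pv3 (px3 θ) p - px3 (px3 ξ) p - px3 ξ p * θ p + ξ p * px3 θ p - θ p * pv3 θ p

/-! On `Ω`, put `E = eˣ` and `u = 1 / (v + t + eˣ)`. Then `ξ = -2u` and `θ = 1 - 2Eu`, and since
`∂_t u = ∂_v u = -u²`, `∂_x u = -Eu²`, `∂_x E = E`, `∂_t E = ∂_v E = 0`, every partial derivative of
`ξ` and `θ` is again a polynomial in `E` and `u`. The four equations of the determining system
become polynomial identities in `E` and `u`. Since `Ω` is open, the first-order formulas may be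
differentiated once more. -/

open Real Set Filter

section Locality
variable {f g : ℝ × ℝ × ℝ → ℝ} {U : Set (ℝ × ℝ × ℝ)} {p : ℝ × ℝ × ℝ}

theorem pt3_congr (hU : IsOpen U) (hfg : EqOn f g U) (hp : p ∈ U) : pt3 f p = pt3 g p := by
  refine EventuallyEq.deriv_eq ?_
  have hslice : ContinuousAt (fun t => (t, p.2.1, p.2.2)) p.1 := by fun_prop
  filter_upwards [hslice.preimage_mem_nhds (hU.mem_nhds hp)] with t ht using hfg ht

theorem px3_congr (hU : IsOpen U) (hfg : EqOn f g U) (hp : p ∈ U) : px3 f p = px3 g p := by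
  refine EventuallyEq.deriv_eq ?_
  have hslice : ContinuousAt (fun x => (p.1, x, p.2.2)) p.2.1 := by fun_prop
  filter_upwards [hslice.preimage_mem_nhds (hU.mem_nhds hp)] with x hx using hfg hx

theorem pv3_congr (hU : IsOpen U) (hfg : EqOn f g U) (hp : p ∈ U) : pv3 f p = pv3 g p := by
  refine EventuallyEq.deriv_eq ?_
  have hslice : ContinuousAt (fun v => (p.1, p.2.1, v)) p.2.2 := by fun_prop
  filter_upwards [hslice.preimage_mem_nhds (hU.mem_nhds hp)] with v hv using hfg hv

end Locality

noncomputable def vAddPhi (p : ℝ × ℝ × ℝ) : ℝ := p.2.2 + p.1 + exp p.2.1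

noncomputable def expMonomial (a n : ℕ) (p : ℝ × ℝ × ℝ) : ℝ := exp p.2.1 ^ a * (vAddPhi p)⁻¹ ^ n

noncomputable def xiExp (p : ℝ × ℝ × ℝ) : ℝ := -2 * expMonomial 0 1 p

noncomputable def thetaExp (p : ℝ × ℝ × ℝ) : ℝ := 1 - 2 * expMonomial 1 1 p

theorem isOpen_vAddPhi_ne_zero : IsOpen {p | vAddPhi p ≠ 0} :=
  isOpen_ne_fun (by unfold vAddPhi; fun_prop) continuous_const

theorem hasDerivAt_expMonomial_comp (a n : ℕ) {τ χ ν : ℝ → ℝ} {τ' χ' ν' s : ℝ}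
    (hτ : HasDerivAt τ τ' s) (hχ : HasDerivAt χ χ' s) (hν : HasDerivAt ν ν' s)
    (hs : vAddPhi (τ s, χ s, ν s) ≠ 0) :
    HasDerivAt (fun s => expMonomial a n (τ s, χ s, ν s))
      (a * χ' * expMonomial a n (τ s, χ s, ν s)
        - n * (ν' + τ' + exp (χ s) * χ') * expMonomial a (n + 1) (τ s, χ s, ν s)) s := by
  have hE := hχ.exp
  have hW : HasDerivAt (fun s => vAddPhi (τ s, χ s, ν s)) (ν' + τ' + exp (χ s) * χ') s :=
    (hν.add hτ).add hE
  refine ((hE.fun_pow a).mul ((hW.fun_inv hs).fun_pow n)).congr_deriv ?_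
  unfold expMonomial
  rcases a with _ | a <;> rcases n with _ | n <;> simp <;> field_simp <;> ring

section Slices
variable (a n : ℕ) {p : ℝ × ℝ × ℝ} (hp : vAddPhi p ≠ 0)
include hp

theorem hasDerivAt_expMonomial_t :
    HasDerivAt (fun t => expMonomial a n (t, p.2.1, p.2.2)) (-n * expMonomial a (n + 1) p) p.1 :=
  (hasDerivAt_expMonomial_comp a n (hasDerivAt_id' p.1) (hasDerivAt_const _ _)
    (hasDerivAt_const _ _) hp).congr_deriv (by ring)

theorem hasDerivAt_expMonomial_v :
    HasDerivAt (fun v => expMonomial a n (p.1, p.2.1, v)) (-n * expMonomial a (n + 1) p) p.2.2 :=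
  (hasDerivAt_expMonomial_comp a n (hasDerivAt_const _ _) (hasDerivAt_const _ _)
    (hasDerivAt_id' p.2.2) hp).congr_deriv (by ring)

theorem hasDerivAt_expMonomial_x :
    HasDerivAt (fun x => expMonomial a n (p.1, x, p.2.2))
      (a * expMonomial a n p - n * expMonomial (a + 1) (n + 1) p) p.2.1 :=
  (hasDerivAt_expMonomial_comp a n (hasDerivAt_const _ _) (hasDerivAt_id' p.2.1)
    (hasDerivAt_const _ _) hp).congr_deriv (by simp only [expMonomial]; ring)

end Slices

section FirstDerivatives
variable {p : ℝ × ℝ × ℝ} (hp : vAddPhi p ≠ 0)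
include hp

theorem pt3_xiExp : pt3 xiExp p = 2 * expMonomial 0 2 p :=
  ((hasDerivAt_expMonomial_t 0 1 hp).const_mul (-2)).deriv.trans (by push_cast; ring)

theorem pv3_xiExp : pv3 xiExp p = 2 * expMonomial 0 2 p :=
  ((hasDerivAt_expMonomial_v 0 1 hp).const_mul (-2)).deriv.trans (by push_cast; ring)

theorem px3_xiExp : px3 xiExp p = 2 * expMonomial 1 2 p :=
  ((hasDerivAt_expMonomial_x 0 1 hp).const_mul (-2)).deriv.trans (by push_cast; ring)

theorem pt3_thetaExp : pt3 thetaExp p = 2 * expMonomial 1 2 p :=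
  (((hasDerivAt_expMonomial_t 1 1 hp).const_mul 2).const_sub 1).deriv.trans (by push_cast; ring)

theorem pv3_thetaExp : pv3 thetaExp p = 2 * expMonomial 1 2 p :=
  (((hasDerivAt_expMonomial_v 1 1 hp).const_mul 2).const_sub 1).deriv.trans (by push_cast; ring)

theorem px3_thetaExp : px3 thetaExp p = -2 * expMonomial 1 1 p + 2 * expMonomial 2 2 p :=
  (((hasDerivAt_expMonomial_x 1 1 hp).const_mul 2).const_sub 1).deriv.trans (by push_cast; ring)

end FirstDerivatives

section SecondDerivatives
variable {p : ℝ × ℝ × ℝ} (hp : vAddPhi p ≠ 0)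
include hp

theorem pv3_pv3_xiExp : pv3 (pv3 xiExp) p = -4 * expMonomial 0 3 p := by
  rw [pv3_congr isOpen_vAddPhi_ne_zero (fun q hq => pv3_xiExp hq) hp]
  exact ((hasDerivAt_expMonomial_v 0 2 hp).const_mul 2).deriv.trans (by push_cast; ring)

theorem pv3_px3_xiExp : pv3 (px3 xiExp) p = -4 * expMonomial 1 3 p := by
  rw [pv3_congr isOpen_vAddPhi_ne_zero (fun q hq => px3_xiExp hq) hp]
  exact ((hasDerivAt_expMonomial_v 1 2 hp).const_mul 2).deriv.trans (by push_cast; ring)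

theorem px3_px3_xiExp :
    px3 (px3 xiExp) p = 2 * expMonomial 1 2 p - 4 * expMonomial 2 3 p := by
  rw [px3_congr isOpen_vAddPhi_ne_zero (fun q hq => px3_xiExp hq) hp]
  exact ((hasDerivAt_expMonomial_x 1 2 hp).const_mul 2).deriv.trans (by push_cast; ring)

theorem pv3_pv3_thetaExp : pv3 (pv3 thetaExp) p = -4 * expMonomial 1 3 p := by
  rw [pv3_congr isOpen_vAddPhi_ne_zero (fun q hq => pv3_thetaExp hq) hp]
  exact ((hasDerivAt_expMonomial_v 1 2 hp).const_mul 2).deriv.trans (by push_cast; ring)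

theorem pv3_px3_thetaExp :
    pv3 (px3 thetaExp) p = 2 * expMonomial 1 2 p - 4 * expMonomial 2 3 p := by
  rw [pv3_congr isOpen_vAddPhi_ne_zero (fun q hq => px3_thetaExp hq) hp]
  exact (((hasDerivAt_expMonomial_v 1 1 hp).const_mul (-2)).add
    ((hasDerivAt_expMonomial_v 2 2 hp).const_mul 2)).deriv.trans (by push_cast; ring)

theorem px3_px3_thetaExp : px3 (px3 thetaExp) p =
    -2 * expMonomial 1 1 p + 6 * expMonomial 2 2 p - 4 * expMonomial 3 3 p := by
  rw [px3_congr isOpen_vAddPhi_ne_zero (fun q hq => px3_thetaExp hq) hp]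
  exact (((hasDerivAt_expMonomial_x 1 1 hp).const_mul (-2)).add
    ((hasDerivAt_expMonomial_x 2 2 hp).const_mul 2)).deriv.trans (by push_cast; ring)

end SecondDerivatives

theorem reduction_operator_case3_exp :
    DeterminingSystem
      (fun p => -2 / (p.2.2 + p.1 + Real.exp p.2.1))
      (fun p => 1 - 2 * Real.exp p.2.1 / (p.2.2 + p.1 + Real.exp p.2.1))
      {p : ℝ × ℝ × ℝ | p.2.2 + p.1 + Real.exp p.2.1 ≠ 0} := by
  have hξ : (fun p : ℝ × ℝ × ℝ => -2 / (p.2.2 + p.1 + exp p.2.1)) = xiExp := by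
    funext p; simp [xiExp, expMonomial, vAddPhi, div_eq_mul_inv]
  have hθ : (fun p : ℝ × ℝ × ℝ => 1 - 2 * exp p.2.1 / (p.2.2 + p.1 + exp p.2.1)) = thetaExp := by
    funext p; simp [thetaExp, expMonomial, vAddPhi, div_eq_mul_inv, mul_assoc]
  rw [hξ, hθ]
  rintro p (hp : vAddPhi p ≠ 0)
  rw [pt3_xiExp hp, pv3_xiExp hp, px3_xiExp hp, pt3_thetaExp hp, pv3_thetaExp hp,
    px3_thetaExp hp, pv3_pv3_xiExp hp, pv3_px3_xiExp hp, px3_px3_xiExp hp, pv3_pv3_thetaExp hp,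
    pv3_px3_thetaExp hp, px3_px3_thetaExp hp]
  simp only [xiExp, thetaExp, expMonomial]
  refine ⟨by ring, by ring, by ring, by ring⟩
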